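/- For integers m, n ≥ 1 with m + n ≥ 3, if the spider Sp(1^[m], 2^[n]) admits a local antimagic total labeling with exactly 2 distinct vertex weights, then (m+n)² − 5(m+n) − 4(n+1) ≤ 0. -/

import Mathlib

/-!
Two weights and `w(x) ≠ w(u_j) ≠ w(v_j)` force every outer leaf `v_j` to carry the weight `a`
of the centre. The centre's weight is a sum of `m + n + 1` distinct positive labels, so
`2a ≥ (m+n+1)(m+n+2)`. The `n` outer leaves together use `2n` distinct labels from
`{1, …, 2m + 4n + 1}` summing to `n a`, which is at most the sum of the `2n` largest labels.
Comparing the two bounds and dividing by `n` gives the inequality.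
-/

open Finset

variable {V : Type*} [Fintype V] [DecidableEq V]

/-- The weight of a vertex `u` under the total labeling given by vertex labels `fv`
and edge labels `fe` : `w(u) = f(u) + \sum_{e incident to u} f(e)`. -/
def latWeight (G : SimpleGraph V) [DecidableRel G.Adj]
    (fv : V → ℕ) (fe : Sym2 V → ℕ) (u : V) : ℕ :=
  fv u + ∑ v ∈ G.neighborFinset u, fe s(u, v)

/-- `fv, fe` together form a bijection from `V(G) ∪ E(G)` onto `{1, …, p + q}`,
where `p` is the order and `q` is the size of `G`. -/
def IsTotalLabeling (G : SimpleGraph V) [DecidableRel G.Adj]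
    (fv : V → ℕ) (fe : Sym2 V → ℕ) : Prop :=
  Set.BijOn (Sum.elim fv (fun e : G.edgeSet => fe (e : Sym2 V))) Set.univ
    (Set.Icc 1 (Fintype.card V + G.edgeFinset.card))

/-- A local antimagic total labeling of `G` : a bijective total labeling such that any two
adjacent vertices get distinct weights. -/
def IsLocalAntimagicTotal (G : SimpleGraph V) [DecidableRel G.Adj]
    (fv : V → ℕ) (fe : Sym2 V → ℕ) : Prop :=
  IsTotalLabeling G fv fe ∧
    ∀ ⦃u v : V⦄, G.Adj u v → latWeight G fv fe u ≠ latWeight G fv fe v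

/-- The local antimagic total chromatic number `χ_lat(G)` : the minimum number of distinct
vertex weights taken over all local antimagic total labelings of `G`. -/
noncomputable def chiLat (G : SimpleGraph V) [DecidableRel G.Adj] : ℕ :=
  sInf {c | ∃ fv fe, IsLocalAntimagicTotal G fv fe ∧
    (Finset.univ.image (latWeight G fv fe)).card = c}

instance {W : Type*} (r : W → W → Prop) [DecidableEq W] [DecidableRel r] :
    DecidableRel (SimpleGraph.fromRel r).Adj :=
  fun a b => decidable_of_iff _ (SimpleGraph.fromRel_adj r a b).symm

/-- Adjacency for the spider `Sp(1^[m], 2^[n])` : the center `x = none` is adjacent to each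
leaf `y i = some (Sum.inl i)` and to each `u j = some (Sum.inr (j, false))`, and each `u j`
is adjacent to the leaf `v j = some (Sum.inr (j, true))`. -/
def spider12R (m n : ℕ) :
    Option (Fin m ⊕ Fin n × Bool) → Option (Fin m ⊕ Fin n × Bool) → Bool
  | none, some (Sum.inl _) => true
  | none, some (Sum.inr (_, false)) => true
  | some (Sum.inr (j, false)), some (Sum.inr (j', true)) => decide (j = j')
  | _, _ => false

/-- The spider `Sp(1^[m], 2^[n])` with `m` legs of length `1` and `n` legs of length `2`. -/
abbrev spider12 (m n : ℕ) : SimpleGraph (Option (Fin m ⊕ Fin n × Bool)) :=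
  SimpleGraph.fromRel (fun a b => spider12R m n a b = true)


theorem Finset.card_mul_card_add_one_le_two_mul_sum {s : Finset ℕ} (hs : 0 ∉ s) :
    #s * (#s + 1) ≤ 2 * ∑ x ∈ s, x := by
  induction s using Finset.induction_on_max with
  | empty => simp
  | insert a s ha ih =>
    have ha_notMem : a ∉ s := fun h => (ha a h).false
    have hs' : 0 ∉ s := fun h => hs (mem_insert_of_mem h)
    have hcard : #s + 1 ≤ a := by
      have hsub : s ⊆ Ico 1 a := fun x hx =>
        mem_Ico.2 ⟨Nat.one_le_iff_ne_zero.2 (ne_of_mem_of_not_mem hx hs'), ha x hx⟩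
      have ha0 : a ≠ 0 := fun h => hs (h ▸ mem_insert_self a s)
      have := card_le_card hsub
      rw [Nat.card_Ico] at this
      omega
    rw [sum_insert ha_notMem, card_insert_of_notMem ha_notMem]
    nlinarith [ih hs']

theorem Finset.two_mul_sum_add_card_mul_le {s : Finset ℕ} {N : ℕ} (hs : s ⊆ Icc 1 N) :
    2 * ∑ x ∈ s, x + #s * (#s + 1) ≤ 2 * #s * (N + 1) := by
  have hle : ∀ x ∈ s, x ≤ N := fun x hx => (mem_Icc.1 (hs hx)).2
  have hinj : Set.InjOn (N + 1 - ·) s := fun x hx y hy h => by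
    have := hle x hx; have := hle y hy; simp only at h; omega
  -- reflecting `s` by `x ↦ N + 1 - x` reduces the upper bound to the lower one
  have hreflect := card_mul_card_add_one_le_two_mul_sum (s := s.image (N + 1 - ·)) (by
    simp only [mem_image, not_exists, not_and]
    intro x hx; have := hle x hx; omega)
  rw [card_image_of_injOn hinj, sum_image hinj] at hreflect
  have hcompl : ∑ x ∈ s, x + ∑ x ∈ s, (N + 1 - x) = #s * (N + 1) := by
    rw [← sum_add_distrib,
      sum_congr rfl fun x hx => Nat.add_sub_of_le (Nat.le_succ_of_le (hle x hx)),
      sum_const, smul_eq_mul]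
  nlinarith

section InjectiveSum

variable {ι : Type*} [Fintype ι] {g : ι → ℕ}

theorem Function.Injective.card_mul_card_add_one_le_two_mul_sum (hg : g.Injective)
    (h0 : ∀ i, g i ≠ 0) : Fintype.card ι * (Fintype.card ι + 1) ≤ 2 * ∑ i, g i := by
  have := Finset.card_mul_card_add_one_le_two_mul_sum (s := univ.image g) (by simpa using h0)
  rwa [sum_image fun i _ j _ h => hg h, card_image_of_injective _ hg] at this

theorem Function.Injective.two_mul_sum_add_card_mul_le (hg : g.Injective) {N : ℕ}
    (hN : ∀ i, g i ∈ Icc 1 N) :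
    2 * ∑ i, g i + Fintype.card ι * (Fintype.card ι + 1) ≤ 2 * Fintype.card ι * (N + 1) := by
  have := Finset.two_mul_sum_add_card_mul_le (s := univ.image g) (by simpa [subset_iff] using hN)
  rwa [sum_image fun i _ j _ h => hg h, card_image_of_injective _ hg] at this

end InjectiveSum

namespace IsTotalLabeling

variable {W : Type*} [Fintype W] {G : SimpleGraph W} [DecidableRel G.Adj]
  {fv : W → ℕ} {fe : Sym2 W → ℕ}

theorem injective (hf : IsTotalLabeling G fv fe) :
    (Sum.elim fv fun e : G.edgeSet => fe e).Injective :=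
  Set.injOn_univ.1 hf.injOn

theorem label_mem_Icc (hf : IsTotalLabeling G fv fe) (x : W ⊕ G.edgeSet) :
    Sum.elim fv (fun e : G.edgeSet => fe e) x ∈ Icc 1 (Fintype.card W + #G.edgeFinset) := by
  simpa using hf.mapsTo (Set.mem_univ x)

theorem succ_degree_mul_le_two_mul_latWeight (hf : IsTotalLabeling G fv fe) (u : W) :
    (G.degree u + 1) * (G.degree u + 2) ≤ 2 * latWeight G fv fe u := by
  let k : Option (G.neighborFinset u) → W ⊕ G.edgeSet
    | none => .inl u
    | some v => .inr ⟨s(u, v), (G.mem_neighborFinset u v).1 v.2⟩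
  have hk : k.Injective := by
    rintro (_ | v) (_ | v') h
    all_goals simp only [k, Sum.inr.injEq, reduceCtorEq] at h
    · rfl
    · exact congrArg some (Subtype.ext (Sym2.congr_right.1 (congrArg Subtype.val h)))
  have := (hf.injective.comp hk).card_mul_card_add_one_le_two_mul_sum
    fun x => (Nat.one_le_iff_ne_zero.1 (mem_Icc.1 (hf.label_mem_Icc (k x))).1)
  rw [Fintype.card_option, Fintype.card_coe, G.card_neighborFinset_eq_degree,
    Fintype.sum_option] at this
  simpa [k, latWeight, add_assoc, Finset.sum_attach _ fun v => fe s(u, v)] using this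

end IsTotalLabeling

section Spider

-- On the `j`-th leg of length two, `some (.inr (j, false))` is the inner vertex `u_j` and
-- `some (.inr (j, true))` the outer leaf `v_j`.
variable {m n : ℕ}

theorem spider12_adj_none_inner (j : Fin n) :
    (spider12 m n).Adj none (some (.inr (j, false))) := by
  simp [spider12R]

theorem spider12_adj_inner_outer (j : Fin n) :
    (spider12 m n).Adj (some (.inr (j, false))) (some (.inr (j, true))) := by
  simp [spider12R]

theorem spider12_neighborFinset_none : (spider12 m n).neighborFinset none =
    univ.image (Sum.elim (fun i => some (.inl i)) fun j => some (.inr (j, false))) := by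
  ext b
  rcases b with _ | (i | ⟨j, _ | _⟩) <;> simp [spider12R]

theorem spider12_degree_none : (spider12 m n).degree none = m + n := by
  rw [← SimpleGraph.card_neighborFinset_eq_degree, spider12_neighborFinset_none,
    card_image_of_injective _ (by rintro (i | j) (i' | j') <;> simp)]
  simp

theorem spider12_neighborFinset_outer (j : Fin n) :
    (spider12 m n).neighborFinset (some (.inr (j, true))) = {some (.inr (j, false))} := by
  ext b
  rcases b with _ | (i | ⟨j', _ | _⟩) <;> simp [spider12R, eq_comm]

variable (m n) in
def spider12Edge : Fin m ⊕ Fin n × Bool → Sym2 (Option (Fin m ⊕ Fin n × Bool))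
  | .inl i => s(none, some (.inl i))
  | .inr (j, false) => s(none, some (.inr (j, false)))
  | .inr (j, true) => s(some (.inr (j, false)), some (.inr (j, true)))

theorem spider12_edgeFinset : (spider12 m n).edgeFinset = univ.image (spider12Edge m n) := by
  ext e
  induction e with | _ a b =>
  rcases a with _ | (i | ⟨j, _ | _⟩) <;> rcases b with _ | (i' | ⟨j', _ | _⟩) <;>
    simp [spider12R, spider12Edge]

theorem spider12Edge_injective : (spider12Edge m n).Injective := by
  rintro (i | ⟨j, _ | _⟩) (i' | ⟨j', _ | _⟩) h <;> simp_all [spider12Edge]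

theorem spider12_card_edgeFinset : #(spider12 m n).edgeFinset = m + 2 * n := by
  rw [spider12_edgeFinset, card_image_of_injective _ spider12Edge_injective]
  simp
  ring

theorem spider12_latWeight_outer (fv : Option (Fin m ⊕ Fin n × Bool) → ℕ)
    (fe : Sym2 (Option (Fin m ⊕ Fin n × Bool)) → ℕ) (j : Fin n) :
    latWeight (spider12 m n) fv fe (some (.inr (j, true))) =
      fv (some (.inr (j, true))) + fe s(some (.inr (j, false)), some (.inr (j, true))) := by
  rw [latWeight, spider12_neighborFinset_outer, sum_singleton, Sym2.eq_swap]

theorem IsTotalLabeling.spider12_two_mul_sum_latWeight_outer_add_le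
    {fv : Option (Fin m ⊕ Fin n × Bool) → ℕ} {fe : Sym2 (Option (Fin m ⊕ Fin n × Bool)) → ℕ}
    (hf : IsTotalLabeling (spider12 m n) fv fe) :
    2 * ∑ j, latWeight (spider12 m n) fv fe (some (.inr (j, true))) + 2 * n * (2 * n + 1) ≤
      4 * n * (2 * m + 4 * n + 2) := by
  let k : Fin n × Bool → Option (Fin m ⊕ Fin n × Bool) ⊕ (spider12 m n).edgeSet
    | (j, true) => .inl (some (.inr (j, true)))
    | (j, false) =>
      .inr ⟨s(some (.inr (j, false)), some (.inr (j, true))), spider12_adj_inner_outer j⟩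
  have hk : k.Injective := by
    rintro ⟨j, _ | _⟩ ⟨j', _ | _⟩ h <;> simp_all [k, Subtype.ext_iff]
  have := (hf.injective.comp hk).two_mul_sum_add_card_mul_le fun x => hf.label_mem_Icc (k x)
  rw [Fintype.sum_prod_type] at this
  simp only [spider12_latWeight_outer]
  simp only [k, Fintype.sum_bool, Fintype.card_prod, Fintype.card_bool, Fintype.card_fin,
    Fintype.card_option, Fintype.card_sum, spider12_card_edgeFinset, Function.comp_apply,
    Sum.elim_inl, Sum.elim_inr] at this
  linarith

end Spider

theorem SimpleGraph.eq_of_adj_of_adj_of_card_image_le_two {W β : Type*} [Fintype W]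
    [DecidableEq β] {G : SimpleGraph W} {w : W → β} (hw : ∀ ⦃u v⦄, G.Adj u v → w u ≠ w v)
    (h2 : #(univ.image w) ≤ 2) {u x v : W} (hux : G.Adj u x) (hxv : G.Adj x v) : w v = w u := by
  by_contra hvu
  have hsub : {w u, w x, w v} ⊆ univ.image w := by simp [insert_subset_iff]
  have := card_le_card hsub
  rw [card_eq_three.2 ⟨_, _, _, hw hux, Ne.symm hvu, hw hxv, rfl⟩] at this
  omega

theorem spider12_two_weights_ineq_general (m n : ℕ) (hn : 1 ≤ n)
    (h : ∃ fv fe, IsLocalAntimagicTotal (spider12 m n) fv fe ∧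
      (Finset.univ.image (latWeight (spider12 m n) fv fe)).card = 2) :
    ((m : ℤ) + n) ^ 2 - 5 * ((m : ℤ) + n) - 4 * ((n : ℤ) + 1) ≤ 0 := by
  obtain ⟨fv, fe, ⟨hf, hw⟩, hcard⟩ := h
  set a := latWeight (spider12 m n) fv fe none
  have hcenter : (m + n + 1) * (m + n + 2) ≤ 2 * a := by
    simpa [spider12_degree_none] using hf.succ_degree_mul_le_two_mul_latWeight none
  have houter (j : Fin n) : latWeight (spider12 m n) fv fe (some (.inr (j, true))) = a :=
    SimpleGraph.eq_of_adj_of_adj_of_card_image_le_two hw hcard.le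
      (spider12_adj_none_inner j) (spider12_adj_inner_outer j)
  have hlegs := hf.spider12_two_mul_sum_latWeight_outer_add_le
  simp only [houter, sum_const, card_univ, Fintype.card_fin, smul_eq_mul] at hlegs
  have : 2 * a + 2 * (2 * n + 1) ≤ 4 * (2 * m + 4 * n + 2) :=
    Nat.le_of_mul_le_mul_left (by linarith) hn
  zify at hcenter this
  linarith

/-- For `m, n ≥ 1` with `m + n ≥ 3`, if the spider `Sp(1^[m], 2^[n])` admits a local
antimagic total labeling with exactly `2` distinct vertex weights, then
`(m+n)² − 5(m+n) − 4(n+1) ≤ 0`. -/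
theorem spider12_two_weights_ineq (m n : ℕ) (hm : 1 ≤ m) (hn : 1 ≤ n) (hmn : 3 ≤ m + n)
    (h : ∃ fv fe, IsLocalAntimagicTotal (spider12 m n) fv fe ∧
      (Finset.univ.image (latWeight (spider12 m n) fv fe)).card = 2) :
    ((m : ℤ) + n) ^ 2 - 5 * ((m : ℤ) + n) - 4 * ((n : ℤ) + 1) ≤ 0 :=
  spider12_two_weights_ineq_general m n hn h
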